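/- Let σ₃-set = {x⊗x⊗x, y⊗x⊗x, x⊗y⊗x, y⊗y⊗x, x⊗x⊗y, y⊗x⊗y, x⊗y⊗y, y⊗y⊗y} be the 8 three-fold Kronecker products of x = σ₁ and y = σ₂, and for an 8×8 density matrix ρ define Q(ρ) = ∑_{s∈σ₃-set} (Re(trace(ρ * s)))². Then for every 8×8 density matrix ρ (i.e., for an arbitrary, possibly entangled, 3-qubit state) one has Q(ρ) ≤ 4, the independence number of the anticommutativity graph of the operator set. -/

import Mathlib

open Matrix
open ComplexOrder

/-- The Pauli matrix `x = σ₁`. -/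
noncomputable def pauliX : Matrix (Fin 2) (Fin 2) ℂ := !![0, 1; 1, 0]

/-- The Pauli matrix `y = σ₂`. -/
noncomputable def pauliY : Matrix (Fin 2) (Fin 2) ℂ := !![0, -Complex.I; Complex.I, 0]

/-- `![x, y]`: chooses `x` or `y`. -/
noncomputable def xy : Fin 2 → Matrix (Fin 2) (Fin 2) ℂ := ![pauliX, pauliY]

/-- The three-fold Kronecker product of single-qubit matrices, as an 8×8 matrix
indexed by `Fin 3 → Fin 2`. -/
noncomputable def kron3 (M : Fin 3 → Matrix (Fin 2) (Fin 2) ℂ) :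
    Matrix (Fin 3 → Fin 2) (Fin 3 → Fin 2) ℂ :=
  Matrix.of fun i j => ∏ m, M m (i m) (j m)

/-- `Q(ρ) = ∑_{s ∈ σ} (Re tr(ρ s))²`, where σ is the set of the 8 (pairwise
distinct) three-fold tensor products of `x` and `y`:
`{xxx, yxx, xyx, yyx, xxy, yxy, xyy, yyy}`. -/
noncomputable def Q3 (ρ : Matrix (Fin 3 → Fin 2) (Fin 3 → Fin 2) ℂ) : ℝ :=
  ∑ f : Fin 3 → Fin 2, ((ρ * kron3 (fun m => xy (f m))).trace.re) ^ 2

/-- A density matrix: positive semidefinite with trace 1. -/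
def IsDensityMatrix {n : Type*} [Fintype n] [DecidableEq n]
    (ρ : Matrix n n ℂ) : Prop :=
  ρ.PosSemidef ∧ ρ.trace = 1

/-!
Flipping `x ↔ y` in every tensor factor (`f ↦ f + 1`) splits the eight operators into four
pairs. The two members of a pair differ in all three factors, and single-qubit `x`, `y`
anticommute, so they anticommute (an odd number of sign changes). For anticommuting Hermitian
involutions `A`, `B` with expectations `a`, `b`, the observable `C = a A + b B` squares to
`(a² + b²) • 1` and has expectation `a² + b²`; nonnegativity of its variance gives
`(a² + b²)² ≤ a² + b²`, i.e. `a² + b² ≤ 1`. Summing over the four pairs gives `Q ≤ 4`.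
-/

section Monogamy

variable {n : Type*} [Fintype n] [DecidableEq n] {ρ : Matrix n n ℂ}

lemma sq_re_trace_mul_le_re_trace_mul_sq (hρ : IsDensityMatrix ρ) {C : Matrix n n ℂ}
    (hC : C.IsHermitian) : (ρ * C).trace.re ^ 2 ≤ (ρ * (C * C)).trace.re := by
  set c := (ρ * C).trace.re
  set X := C - (c : ℂ) • 1
  have hX : Xᴴ = X := by
    simp [X, conjTranspose_sub, conjTranspose_smul, hC.eq]
  have hvar : 0 ≤ (X * ρ * Xᴴ).trace := (hρ.1.mul_mul_conjTranspose_same X).trace_nonneg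
  rw [trace_mul_cycle, ← trace_mul_comm, hX] at hvar
  have hexp :
      ρ * (X * X) = ρ * (C * C) - ((2 * c : ℝ) : ℂ) • (ρ * C) + ((c ^ 2 : ℝ) : ℂ) • ρ := by
    simp only [X, sub_mul, mul_sub, smul_mul_assoc, mul_smul_comm, one_mul, mul_one,
      smul_smul, smul_sub]
    push_cast
    module
  rw [hexp, trace_add, trace_sub, trace_smul, trace_smul, hρ.2] at hvar
  have := (Complex.nonneg_iff.mp hvar).1
  simp only [smul_eq_mul, mul_one, Complex.add_re, Complex.sub_re, Complex.re_ofReal_mul,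
    Complex.ofReal_re] at this
  nlinarith

lemma re_trace_mul_sq_add_sq_le_one (hρ : IsDensityMatrix ρ) {A B : Matrix n n ℂ}
    (hA : A.IsHermitian) (hB : B.IsHermitian) (hA2 : A * A = 1) (hB2 : B * B = 1)
    (hAB : A * B = -(B * A)) :
    (ρ * A).trace.re ^ 2 + (ρ * B).trace.re ^ 2 ≤ 1 := by
  set a := (ρ * A).trace.re
  set b := (ρ * B).trace.re
  set C := (a : ℂ) • A + (b : ℂ) • B
  have hC : C.IsHermitian :=
    (hA.smul (Complex.conj_ofReal a)).add (hB.smul (Complex.conj_ofReal b))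
  have hC2 : C * C = ((a ^ 2 + b ^ 2 : ℝ) : ℂ) • 1 := by
    simp only [C, add_mul, mul_add, smul_mul_assoc, mul_smul_comm, hA2, hB2, hAB, smul_neg]
    push_cast
    module
  have hvar := sq_re_trace_mul_le_re_trace_mul_sq hρ hC
  have hmean : (ρ * C).trace.re = a ^ 2 + b ^ 2 := by
    simp only [C, mul_add, mul_smul_comm, trace_add, trace_smul, smul_eq_mul, Complex.add_re,
      Complex.re_ofReal_mul]
    ring
  rw [hC2, mul_smul_comm, mul_one, trace_smul, hρ.2, smul_eq_mul, mul_one, Complex.ofReal_re,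
    hmean] at hvar
  nlinarith [sq_nonneg a, sq_nonneg b]

end Monogamy

lemma xy_isHermitian (c : Fin 2) : (xy c).IsHermitian := by
  fin_cases c <;> ext i j <;> fin_cases i <;> fin_cases j <;>
    simp [xy, pauliX, pauliY, conjTranspose_apply]

lemma xy_mul_self (c : Fin 2) : xy c * xy c = 1 := by
  fin_cases c <;> simp [xy, pauliX, pauliY, one_fin_two]

lemma xy_mul_xy_add_one (c : Fin 2) : xy c * xy (c + 1) = -(xy (c + 1) * xy c) := by
  fin_cases c <;> simp [xy, pauliX, pauliY]

lemma kron3_mul (M N : Fin 3 → Matrix (Fin 2) (Fin 2) ℂ) :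
    kron3 M * kron3 N = kron3 (fun m => M m * N m) := by
  ext i j
  simp only [kron3, mul_apply, of_apply, Finset.prod_univ_sum, Fintype.piFinset_univ,
    Finset.prod_mul_distrib]

lemma kron3_one : kron3 (fun _ => 1) = 1 := by
  ext i j
  simp [kron3, one_apply, Fintype.prod_boole, funext_iff]

lemma kron3_mul_self {M : Fin 3 → Matrix (Fin 2) (Fin 2) ℂ} (hM : ∀ m, M m * M m = 1) :
    kron3 M * kron3 M = 1 := by
  rw [kron3_mul, funext hM, kron3_one]

lemma kron3_isHermitian {M : Fin 3 → Matrix (Fin 2) (Fin 2) ℂ} (hM : ∀ m, (M m).IsHermitian) :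
    (kron3 M).IsHermitian := by
  ext i j
  simp only [kron3, conjTranspose_apply, of_apply, star_prod]
  exact Finset.prod_congr rfl fun m _ => (hM m).apply (i m) (j m)

lemma kron3_mul_eq_neg {M N : Fin 3 → Matrix (Fin 2) (Fin 2) ℂ}
    (h : ∀ m, M m * N m = -(N m * M m)) : kron3 M * kron3 N = -(kron3 N * kron3 M) := by
  rw [kron3_mul, kron3_mul, funext h]
  ext i j
  simp only [kron3, Matrix.neg_apply, of_apply, Fin.prod_univ_three]
  ring

lemma two_mul_sum_le_card_mul {ι R : Type*} [Fintype ι] [Semiring R] [PartialOrder R]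
    [IsOrderedAddMonoid R] (e : ι ≃ ι) {a : ι → R} {c : R} (h : ∀ i, a i + a (e i) ≤ c) :
    2 * ∑ i, a i ≤ Fintype.card ι * c := by
  calc 2 * ∑ i, a i = ∑ i, (a i + a (e i)) := by
        rw [two_mul, Finset.sum_add_distrib, e.sum_comp a]
    _ ≤ ∑ _i : ι, c := Finset.sum_le_sum fun i _ => h i
    _ = Fintype.card ι * c := by rw [Finset.sum_const, nsmul_eq_mul, Finset.card_univ]

/-- For every 3-qubit density matrix (an arbitrary, possibly entangled state),
`Q(ρ) ≤ 4`, the independence number of the anticommutativity graph of the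
operator set. -/
theorem three_qubit_Q_le_four
    (ρ : Matrix (Fin 3 → Fin 2) (Fin 3 → Fin 2) ℂ)
    (hρ : IsDensityMatrix ρ) :
    Q3 ρ ≤ 4 := by
  have hpair (f : Fin 3 → Fin 2) :
      (ρ * kron3 (fun m => xy (f m))).trace.re ^ 2 +
        (ρ * kron3 (fun m => xy ((f + 1) m))).trace.re ^ 2 ≤ 1 :=
    re_trace_mul_sq_add_sq_le_one hρ (kron3_isHermitian fun _ => xy_isHermitian _)
      (kron3_isHermitian fun _ => xy_isHermitian _) (kron3_mul_self fun _ => xy_mul_self _)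
      (kron3_mul_self fun _ => xy_mul_self _) (kron3_mul_eq_neg fun m => xy_mul_xy_add_one (f m))
  have hsum : 2 * Q3 ρ ≤ Fintype.card (Fin 3 → Fin 2) * 1 :=
    two_mul_sum_le_card_mul (Equiv.addRight 1) hpair
  norm_num [Fintype.card_fun] at hsum
  linarith
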